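/- arXiv:1702.07154 — 7 statements merged into one kernel-verified Lean document; each statement's English description precedes it below -/
import Mathlib

section
/- A sequence (a_n) of real numbers converges statistically to a real number a if and only if there exists a set K ⊆ ℕ of natural density 1 such that the subsequence of (a_n) indexed by K (in increasing order) converges to a in the usual sense. -/
/-!
The sets `B j = {n | 1 / (j + 1) ≤ |a n - l|}` increase with `j`. If each has density zero,
a diagonal choice of thresholds `N j` glues them into one density-zero set `C`, equal to `B j`
on the block `[N j, N (j + 1))`; every `B j` lies in `C` up to finitely many points, so `a`
tends to `l` along the complement of `C`, a set of density one. Conversely, if `a ∘ k → l`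
then `{n | ε ≤ |a n - l|}` lies in `(range k)ᶜ` up to finitely many points.
-/

open Filter
open scoped Classical

/-- `dens A c`: the set `A ⊆ ℕ` has natural density `c`. -/
def dens (A : Set ℕ) (c : ℝ) : Prop :=
  Tendsto (fun n : ℕ => (((Finset.range n).filter (fun k => k ∈ A)).card : ℝ) / n)
    atTop (nhds c)

/-- Statistical convergence of a real sequence. -/
def StatTendsto (a : ℕ → ℝ) (l : ℝ) : Prop :=
  ∀ ε > 0, dens {n | ε ≤ |a n - l|} 0

open Topology

theorem dens_iff_count {A : Set ℕ} {c : ℝ} :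
    dens A c ↔ Tendsto (fun n : ℕ => (Nat.count (· ∈ A) n : ℝ) / n) atTop (𝓝 c) := by
  simp only [dens, Nat.count_eq_card_filter_range]

theorem dens_zero_of_finite {A : Set ℕ} (hA : A.Finite) : dens A 0 := by
  rw [dens_iff_count]
  refine squeeze_zero (fun n => by positivity) (fun n => ?_)
    (tendsto_const_div_atTop_nhds_zero_nat (hA.toFinset.card : ℝ))
  gcongr
  exact_mod_cast Nat.count_le_card (p := (· ∈ A)) hA n

theorem dens_zero_of_subset_union {A B C : Set ℕ} (hABC : A ⊆ B ∪ C) (hB : dens B 0)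
    (hC : dens C 0) : dens A 0 := by
  rw [dens_iff_count] at *
  have hBC := hB.add hC
  rw [add_zero] at hBC
  refine squeeze_zero (fun n => by positivity) (fun n => ?_) hBC
  rw [← add_div]
  gcongr
  have hcount : Nat.count (· ∈ A) n ≤ Nat.count (· ∈ B) n + Nat.count (· ∈ C) n := by
    simp only [Nat.count_eq_card_filter_range]
    refine (Finset.card_le_card fun k hk => ?_).trans (Finset.card_union_le _ _)
    simp only [Finset.mem_union, Finset.mem_filter] at hk ⊢
    simpa [hk.1] using hABC hk.2
  exact_mod_cast hcount

theorem dens_compl {A : Set ℕ} {c : ℝ} (h : dens A c) : dens Aᶜ (1 - c) := by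
  refine (tendsto_const_nhds.sub h).congr' ?_
  filter_upwards [eventually_ne_atTop 0] with n hn
  have hsplit : (((Finset.range n).filter (· ∈ A)).card : ℝ)
      + ((Finset.range n).filter (· ∉ A)).card = n := by
    exact_mod_cast (Finset.card_range n) ▸ Finset.card_filter_add_card_filter_not (· ∈ A)
  simp only [Set.mem_compl_iff]
  rw [eq_div_iff (by positivity), sub_mul, div_mul_cancel₀ _ (by positivity)]
  linarith

theorem infinite_of_dens_one {A : Set ℕ} (h : dens A 1) : A.Infinite := fun hA =>
  zero_ne_one (tendsto_nhds_unique (dens_zero_of_finite hA) h)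

theorem exists_monotone_tendsto_diag {u : ℕ → ℕ → ℝ}
    (hu : ∀ j, Tendsto (u j) atTop (𝓝 0)) :
    ∃ φ : ℕ → ℕ, Monotone φ ∧ Tendsto φ atTop atTop ∧
      Tendsto (fun n => u (φ n) n) atTop (𝓝 0) := by
  choose M hM using fun j => Metric.tendsto_atTop.1 (hu j) _ (Nat.one_div_pos_of_nat (n := j))
  set N : ℕ → ℕ := fun j => j + ∑ i ∈ Finset.range (j + 1), M i
  have hN_mono : Monotone N := fun i j hij =>
    add_le_add hij (Finset.sum_le_sum_of_subset (Finset.range_subset_range.2 (by omega)))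
  have hM_le_N : ∀ j, M j ≤ N j := fun j =>
    (Finset.single_le_sum (fun _ _ => Nat.zero_le _) (Finset.self_mem_range_succ j)).trans
      (Nat.le_add_left _ _)
  set φ : ℕ → ℕ := fun n => Nat.findGreatest (fun j => N j ≤ n) n
  have hφ_top : Tendsto φ atTop atTop := tendsto_atTop.2 fun j => eventually_atTop.2
    ⟨N j, fun n hn => Nat.le_findGreatest ((Nat.le_add_right _ _).trans hn) hn⟩
  refine ⟨φ, fun m n hmn => Nat.findGreatest_mono (fun j hj => hj.trans hmn) hmn, hφ_top, ?_⟩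
  refine squeeze_zero_norm' ?_ (tendsto_one_div_add_atTop_nhds_zero_nat.comp hφ_top)
  filter_upwards [eventually_ge_atTop (N 0)] with n hn
  have hNφ : N (φ n) ≤ n := Nat.findGreatest_spec (P := fun j => N j ≤ n) (Nat.zero_le n) hn
  rw [Function.comp_apply, ← dist_zero_right]
  exact (hM (φ n) n ((hM_le_N _).trans hNφ)).le

theorem exists_dens_zero_forall_diff_finite {B : ℕ → Set ℕ} (hB_mono : Monotone B)
    (hB : ∀ j, dens (B j) 0) : ∃ C, dens C 0 ∧ ∀ j, (B j \ C).Finite := by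
  obtain ⟨φ, hφ_mono, hφ_top, hφ⟩ :=
    exists_monotone_tendsto_diag fun j => dens_iff_count.1 (hB j)
  refine ⟨{n | n ∈ B (φ n)}, ?_, fun j => ?_⟩
  · rw [dens_iff_count]
    refine squeeze_zero (fun n => by positivity) (fun n => ?_) hφ
    have hcount : Nat.count (· ∈ {n | n ∈ B (φ n)}) n ≤ Nat.count (· ∈ B (φ n)) n :=
      Nat.count_mono_left fun k hk hkB => hB_mono (hφ_mono hk.le) hkB
    gcongr
  · obtain ⟨n₀, hn₀⟩ := eventually_atTop.1 (hφ_top.eventually_ge_atTop j)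
    refine (Set.finite_Iio n₀).subset fun n ⟨hnB, hnC⟩ => ?_
    by_contra hn
    exact hnC (hB_mono (hn₀ n (not_lt.1 hn)) hnB)

theorem finite_setOf_le_abs_sub_of_tendsto {a : ℕ → ℝ} {l ε : ℝ}
    (h : Tendsto a atTop (𝓝 l)) (hε : 0 < ε) : {n | ε ≤ |a n - l|}.Finite := by
  have hev := Metric.tendsto_nhds.1 h ε hε
  rw [← Nat.cofinite_eq_atTop, eventually_cofinite] at hev
  simpa only [Real.dist_eq, not_lt] using hev

theorem tendsto_comp_nth_of_finite {a : ℕ → ℝ} {l : ℝ} {K : Set ℕ} (hK : K.Infinite)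
    (h : ∀ ε > 0, {n ∈ K | ε ≤ |a n - l|}.Finite) :
    Tendsto (fun n => a (Nat.nth (· ∈ K) n)) atTop (𝓝 l) := by
  have hnth : Tendsto (Nat.nth (· ∈ K)) atTop (atTop ⊓ 𝓟 K) :=
    tendsto_inf.2 ⟨(Nat.nth_strictMono hK).tendsto_atTop,
      tendsto_principal.2 (Eventually.of_forall (Nat.nth_mem_of_infinite hK))⟩
  refine Tendsto.comp ?_ hnth
  refine Metric.tendsto_nhds.2 fun ε hε => eventually_inf_principal.2 ?_
  rw [← Nat.cofinite_eq_atTop, eventually_cofinite]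
  simpa only [Real.dist_eq, not_lt, Classical.not_imp] using h ε hε

theorem stat_tendsto_iff_subseq (a : ℕ → ℝ) (l : ℝ) :
    StatTendsto a l ↔
      ∃ k : ℕ → ℕ, StrictMono k ∧ dens (Set.range k) 1 ∧
        Tendsto (fun n => a (k n)) atTop (nhds l) := by
  constructor
  · intro h
    obtain ⟨C, hC, hC_fin⟩ := exists_dens_zero_forall_diff_finite
      (B := fun j => {n | 1 / ((j : ℝ) + 1) ≤ |a n - l|})
      (fun i j hij => Set.ofPred_subset_ofPred.2 fun _ => (Nat.one_div_le_one_div hij).trans)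
      (fun j => h _ Nat.one_div_pos_of_nat)
    have hK : dens Cᶜ 1 := by simpa using dens_compl hC
    have hK_inf := infinite_of_dens_one hK
    refine ⟨Nat.nth (· ∈ Cᶜ), Nat.nth_strictMono hK_inf,
      by rwa [Nat.range_nth_of_infinite (p := (· ∈ Cᶜ)) hK_inf],
      tendsto_comp_nth_of_finite hK_inf fun ε hε => ?_⟩
    obtain ⟨j, hj⟩ := exists_nat_one_div_lt hε
    exact (hC_fin j).subset fun n ⟨hnK, hn⟩ => ⟨hj.le.trans hn, hnK⟩
  · rintro ⟨k, -, hk_dens, hk_tendsto⟩ ε hε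
    refine dens_zero_of_subset_union (B := (Set.range k)ᶜ) (C := k '' {i | ε ≤ |a (k i) - l|})
      (fun n hn => ?_) (by simpa using dens_compl hk_dens)
      (dens_zero_of_finite ((finite_setOf_le_abs_sub_of_tendsto hk_tendsto hε).image k))
    by_cases hnk : n ∈ Set.range k
    · obtain ⟨i, rfl⟩ := hnk
      exact Or.inr ⟨i, hn, rfl⟩
    · exact Or.inl hnk
end

section
/- A sequence (a_n) of real numbers converges statistically to some real number if and only if it is statistically Cauchy, i.e., for every ε > 0 there exists n₀ ∈ ℕ such that d({n : |a_n - a_{n₀}| ≥ ε}) = 0. -/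
/-!
The sets of natural density zero form an ideal of `Set ℕ` that does not contain `ℕ` itself, so
their complements form a proper filter on `ℕ`. Statistical convergence is convergence along this
filter, and a sequence is statistically Cauchy exactly when its image filter is Cauchy; the
theorem is then the completeness of `ℝ`.
-/

open Filter MeasureTheory
open scoped Classical ENNReal

/-- A sequence is measurable in the sense of Fast if the densities of the sets
`{n : a n < x}` exist outside an at most countable set of `x`'s. -/
def FastMeasurable (a : ℕ → ℝ) : Prop :=
  ∃ S : Set ℝ, S.Countable ∧ ∀ x ∉ S, ∃ c, dens {n | a n < x} c

open Topology

section CauchyMap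

variable {α β : Type*} [PseudoMetricSpace β] {l : Filter α} [l.NeBot] {f : α → β}

theorem Metric.cauchy_map_iff_exists_eventually_dist_lt :
    Cauchy (map f l) ↔ ∀ ε > 0, ∃ x, ∀ᶠ y in l, dist (f y) (f x) < ε := by
  rw [Metric.cauchy_iff]
  refine ⟨fun ⟨_, h⟩ ε hε => ?_, fun h => ⟨inferInstance, fun ε hε => ?_⟩⟩
  · obtain ⟨t, ht, hdist⟩ := h ε hε
    obtain ⟨x, hx⟩ := l.nonempty_of_mem (mem_map.1 ht)
    exact ⟨x, mem_of_superset (mem_map.1 ht) fun y hy => hdist _ hy _ hx⟩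
  · obtain ⟨x, hx⟩ := h (ε / 2) (half_pos hε)
    refine ⟨Metric.ball (f x) (ε / 2), hx, fun y hy z hz => ?_⟩
    calc dist y z ≤ dist y (f x) + dist z (f x) := dist_triangle_right _ _ _
      _ < ε / 2 + ε / 2 := add_lt_add hy hz
      _ = ε := add_halves ε

end CauchyMap

theorem dens_zero_of_subset {A B : Set ℕ} (h : A ⊆ B) (hB : dens B 0) : dens A 0 := by
  refine squeeze_zero (fun n => by positivity) (fun n => ?_) hB
  gcongr

theorem dens_zero_union {A B : Set ℕ} (hA : dens A 0) (hB : dens B 0) : dens (A ∪ B) 0 := by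
  refine squeeze_zero (fun n => by positivity) (fun n => ?_) (by simpa using hA.add hB)
  simp only [Set.mem_union, Finset.filter_or, ← add_div]
  gcongr
  exact_mod_cast Finset.card_union_le _ _

theorem dens_empty : dens ∅ 0 := by
  simp [dens]

theorem dens_univ_one : dens Set.univ 1 := by
  refine tendsto_const_nhds.congr' ?_
  filter_upwards [eventually_ne_atTop 0] with n hn
  simp [hn]

def statFilter : Filter ℕ :=
  comk (dens · 0) dens_empty
    (fun _ ht _ hst => dens_zero_of_subset hst ht) fun _ hs _ ht => dens_zero_union hs ht

theorem eventually_statFilter_iff {p : ℕ → Prop} :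
    (∀ᶠ n in statFilter, p n) ↔ dens {n | ¬p n} 0 :=
  Iff.rfl

instance : statFilter.NeBot := by
  refine ⟨fun h => one_ne_zero (tendsto_nhds_unique dens_univ_one ?_)⟩
  have hdens := eventually_statFilter_iff.1 (h ▸ eventually_bot : ∀ᶠ _ in statFilter, False)
  rwa [show {n : ℕ | ¬False} = Set.univ from Set.eq_univ_of_forall fun _ => not_false] at hdens

theorem statTendsto_iff_tendsto_statFilter {a : ℕ → ℝ} {l : ℝ} :
    StatTendsto a l ↔ Tendsto a statFilter (𝓝 l) := by
  simp only [Metric.tendsto_nhds, eventually_statFilter_iff, Real.dist_eq, not_lt, StatTendsto]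

theorem statCauchy_iff_cauchy_map_statFilter {a : ℕ → ℝ} :
    (∀ ε > 0, ∃ n₀ : ℕ, dens {n | ε ≤ |a n - a n₀|} 0) ↔ Cauchy (map a statFilter) := by
  simp only [Metric.cauchy_map_iff_exists_eventually_dist_lt, eventually_statFilter_iff,
    Real.dist_eq, not_lt]

theorem stat_tendsto_iff_statCauchy (a : ℕ → ℝ) :
    (∃ l : ℝ, StatTendsto a l) ↔
      ∀ ε > 0, ∃ n₀ : ℕ, dens {n | ε ≤ |a n - a n₀|} 0 := by
  simp only [statTendsto_iff_tendsto_statFilter, statCauchy_iff_cauchy_map_statFilter,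
    cauchy_map_iff_exists_tendsto]
end

section
/- If (a_n) is a bounded sequence of real numbers and a ∈ ℝ, then (a_n) converges statistically to a if and only if the Cesàro means (1/n) Σ_{k=1}^n |a_k - a| converge to 0. In particular, for a bounded sequence, statistical convergence to a implies (1/n) Σ_{k=1}^n a_k → a. -/
open Filter MeasureTheory
open scoped Classical ENNReal

/-!
A nonnegative sequence bounded by `M` has partial sums `∑_{k<n} b k ≤ δ n + M · #{k < n | δ ≤ b k}`,
so density zero of every set `{δ ≤ b k}` forces Cesàro means below any `δ > 0`. Conversely,
Markov's inequality `ε · #{k < n | ε ≤ b k} ≤ ∑_{k<n} b k` bounds those densities by the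
Cesàro means. Take `b k = |a k - l|`; the last claim follows from
`|(∑ a k)/n - l| ≤ (∑ |a k - l|)/n`.
-/

open Finset hiding dens

lemma dens_setOf_iff (p : ℕ → Prop) [DecidablePred p] (c : ℝ) :
    dens {k | p k} c ↔ Tendsto (fun n : ℕ => (#{k ∈ range n | p k} : ℝ) / n) atTop (nhds c) := by
  unfold dens
  congr!

section Cesaro

variable {b : ℕ → ℝ}

lemma card_filter_le_mul_le_sum (hb : ∀ k, 0 ≤ b k) (ε : ℝ) (n : ℕ) :
    #{k ∈ range n | ε ≤ b k} * ε ≤ ∑ k ∈ range n, b k :=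
  calc (#{k ∈ range n | ε ≤ b k} : ℝ) * ε ≤ ∑ k ∈ range n with ε ≤ b k, b k := by
        simpa using card_nsmul_le_sum _ b ε fun k hk => (mem_filter.1 hk).2
    _ ≤ ∑ k ∈ range n, b k :=
        sum_le_sum_of_subset_of_nonneg (filter_subset _ _) fun k _ _ => hb k

lemma sum_range_le_mul_add_mul_card {M δ : ℝ} (hM : ∀ k, b k ≤ M) (hδ : 0 ≤ δ) (n : ℕ) :
    ∑ k ∈ range n, b k ≤ δ * n + M * #{k ∈ range n | δ ≤ b k} := by
  rw [← sum_filter_add_sum_filter_not (range n) (fun k => δ ≤ b k)]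
  have hlarge : ∑ k ∈ range n with δ ≤ b k, b k ≤ #{k ∈ range n | δ ≤ b k} * M := by
    simpa using sum_le_card_nsmul _ b M fun k _ => hM k
  have hsmall : ∑ k ∈ range n with ¬δ ≤ b k, b k ≤ #{k ∈ range n | ¬δ ≤ b k} * δ := by
    simpa using sum_le_card_nsmul _ b δ fun k hk => (not_le.1 (mem_filter.1 hk).2).le
  have hcard : (#{k ∈ range n | ¬δ ≤ b k} : ℝ) ≤ n := by
    exact_mod_cast (card_filter_le _ _).trans_eq (card_range n)
  nlinarith

lemma dens_zero_of_tendsto_cesaro_zero (hb : ∀ k, 0 ≤ b k)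
    (h : Tendsto (fun n : ℕ => (∑ k ∈ range n, b k) / n) atTop (nhds 0)) {ε : ℝ} (hε : 0 < ε) :
    dens {k | ε ≤ b k} 0 := by
  rw [dens_setOf_iff]
  refine squeeze_zero (fun n => by positivity) (fun n => ?_) (by simpa using h.div_const ε)
  rw [le_div_iff₀ hε, div_mul_eq_mul_div]
  exact div_le_div_of_nonneg_right (card_filter_le_mul_le_sum hb ε n) n.cast_nonneg

lemma tendsto_cesaro_zero_of_dens_zero {M : ℝ} (hb : ∀ k, 0 ≤ b k) (hM : ∀ k, b k ≤ M)
    (h : ∀ ε > 0, dens {k | ε ≤ b k} 0) :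
    Tendsto (fun n : ℕ => (∑ k ∈ range n, b k) / n) atTop (nhds 0) := by
  refine tendsto_order.2 ⟨fun ε hε => Eventually.of_forall fun n => ?_, fun ε hε => ?_⟩
  · exact hε.trans_le (div_nonneg (sum_nonneg fun k _ => hb k) n.cast_nonneg)
  have hδ : 0 < ε / 2 := half_pos hε
  have hbound : Tendsto (fun n : ℕ => ε / 2 + M * ((#{k ∈ range n | ε / 2 ≤ b k} : ℝ) / n))
      atTop (nhds (ε / 2)) := by
    simpa using tendsto_const_nhds.add (((dens_setOf_iff _ _).1 (h _ hδ)).const_mul M)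
  filter_upwards [hbound.eventually_lt_const (half_lt_self hε), eventually_gt_atTop 0]
    with n hn hn0
  refine lt_of_le_of_lt ?_ hn
  rw [div_le_iff₀ (by positivity), add_mul, mul_assoc, div_mul_cancel₀ _ (by positivity)]
  exact sum_range_le_mul_add_mul_card hM hδ.le n

lemma tendsto_cesaro_zero_iff_dens_zero {M : ℝ} (hb : ∀ k, 0 ≤ b k) (hM : ∀ k, b k ≤ M) :
    Tendsto (fun n : ℕ => (∑ k ∈ range n, b k) / n) atTop (nhds 0) ↔
      ∀ ε > 0, dens {k | ε ≤ b k} 0 :=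
  ⟨fun h _ hε => dens_zero_of_tendsto_cesaro_zero hb h hε,
    tendsto_cesaro_zero_of_dens_zero hb hM⟩

end Cesaro

lemma tendsto_cesaro_of_tendsto_cesaro_abs_sub {a : ℕ → ℝ} {l : ℝ}
    (h : Tendsto (fun n : ℕ => (∑ k ∈ range n, |a k - l|) / n) atTop (nhds 0)) :
    Tendsto (fun n : ℕ => (∑ k ∈ range n, a k) / n) atTop (nhds l) := by
  rw [tendsto_iff_norm_sub_tendsto_zero]
  refine squeeze_zero' (Eventually.of_forall fun n => norm_nonneg _) ?_ h
  filter_upwards [eventually_gt_atTop 0] with n hn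
  have hn' : (0 : ℝ) < n := by exact_mod_cast hn
  have hmean : (∑ k ∈ range n, a k) / n - l = (∑ k ∈ range n, (a k - l)) / n := by
    rw [sum_sub_distrib, sum_const, card_range, nsmul_eq_mul]
    field_simp
  rw [hmean, Real.norm_eq_abs, abs_div, abs_of_pos hn']
  gcongr
  exact abs_sum_le_sum_abs _ _

theorem stat_tendsto_iff_cesaro_of_bounded (a : ℕ → ℝ) (l : ℝ)
    (hb : ∃ M : ℝ, ∀ n, |a n| ≤ M) :
    (StatTendsto a l ↔
      Tendsto (fun n : ℕ => (∑ k ∈ Finset.range n, |a k - l|) / n) atTop (nhds 0)) ∧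
    (StatTendsto a l →
      Tendsto (fun n : ℕ => (∑ k ∈ Finset.range n, a k) / n) atTop (nhds l)) := by
  obtain ⟨M, hM⟩ := hb
  have hbound : ∀ k, |a k - l| ≤ M + |l| := fun k =>
    (abs_sub _ _).trans (by linarith [hM k])
  have hcesaro := (tendsto_cesaro_zero_iff_dens_zero (fun k => abs_nonneg (a k - l)) hbound).symm
  exact ⟨hcesaro, fun h => tendsto_cesaro_of_tendsto_cesaro_abs_sub (hcesaro.1 h)⟩
end

section
/- If (a_n) is a sequence of real numbers with a_n ≥ a for all n, and the Cesàro means (1/n) Σ_{k=1}^n a_k converge to a, then (a_n) converges statistically to a. -/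
open Filter MeasureTheory
open scoped Classical ENNReal

/-! Markov's inequality: the deviations `a k - l` are nonnegative, so
`ε · #{k < n | ε ≤ a k - l} ≤ ∑_{k < n} (a k - l)`, and the right-hand side is `o(n)`
because the Cesàro means converge to `l`. -/

theorem Finset.card_filter_nsmul_le_sum {ι M : Type*} [AddCommMonoid M] [PartialOrder M]
    [IsOrderedAddMonoid M] (s : Finset ι) (f : ι → M) (ε : M) (hf : ∀ i ∈ s, 0 ≤ f i) :
    (s.filter (fun i => ε ≤ f i)).card • ε ≤ ∑ i ∈ s, f i :=
  calc (s.filter (fun i => ε ≤ f i)).card • ε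
      ≤ ∑ i ∈ s.filter (fun i => ε ≤ f i), f i :=
        Finset.card_nsmul_le_sum _ _ _ fun _ hi => (Finset.mem_filter.1 hi).2
    _ ≤ ∑ i ∈ s, f i :=
        Finset.sum_le_sum_of_subset_of_nonneg (Finset.filter_subset _ _) fun _ hi _ => hf _ hi

theorem tendsto_cesaro_sub_const {a : ℕ → ℝ} {l : ℝ} (c : ℝ)
    (h : Tendsto (fun n : ℕ => (∑ k ∈ Finset.range n, a k) / n) atTop (nhds l)) :
    Tendsto (fun n : ℕ => (∑ k ∈ Finset.range n, (a k - c)) / n) atTop (nhds (l - c)) := by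
  refine (h.sub_const c).congr' ?_
  filter_upwards [eventually_gt_atTop 0] with n hn
  rw [Finset.sum_sub_distrib, Finset.sum_const, Finset.card_range, nsmul_eq_mul, sub_div,
    mul_div_cancel_left₀ _ (Nat.cast_ne_zero.2 hn.ne')]

theorem dens_setOf_le_zero_of_cesaro_tendsto_zero {b : ℕ → ℝ} (hb : ∀ n, 0 ≤ b n)
    (hc : Tendsto (fun n : ℕ => (∑ k ∈ Finset.range n, b k) / n) atTop (nhds 0))
    {ε : ℝ} (hε : 0 < ε) : dens {n | ε ≤ b n} 0 := by
  have hbound : ∀ n : ℕ, (((Finset.range n).filter (fun k => k ∈ {m | ε ≤ b m})).card : ℝ) / n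
      ≤ (∑ k ∈ Finset.range n, b k) / n / ε := by
    intro n
    rw [le_div_iff₀ hε, div_mul_eq_mul_div, ← nsmul_eq_mul]
    exact div_le_div_of_nonneg_right
      (Finset.card_filter_nsmul_le_sum _ _ _ fun k _ => hb k) n.cast_nonneg
  refine tendsto_of_tendsto_of_tendsto_of_le_of_le tendsto_const_nhds ?_ (fun n => by positivity)
    hbound
  simpa using hc.div_const ε

theorem stat_tendsto_of_cesaro_of_le (a : ℕ → ℝ) (l : ℝ)
    (hge : ∀ n, l ≤ a n)
    (hc : Tendsto (fun n : ℕ => (∑ k ∈ Finset.range n, a k) / n) atTop (nhds l)) :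
    StatTendsto a l := by
  intro ε hε
  have hnonneg : ∀ n, 0 ≤ a n - l := fun n => sub_nonneg.2 (hge n)
  have hcesaro := tendsto_cesaro_sub_const l hc
  rw [sub_self] at hcesaro
  simpa only [abs_of_nonneg (hnonneg _)] using
    dens_setOf_le_zero_of_cesaro_tendsto_zero hnonneg hcesaro hε
end

section
/- Let (f_n), f be measurable real-valued functions on [0,1) with Lebesgue measure λ. If (f_n) converges statistically almost everywhere to f (i.e., for λ-a.e. x, f_n(x) →_st f(x)), then (f_n) converges statistically in measure to f, i.e., for every ε > 0 the real sequence (λ({x : |f_n(x) - f(x)| ≥ ε}))_n converges statistically to 0. -/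
open Filter MeasureTheory
open scoped Classical ENNReal

open Finset hiding dens
open Topology

/-!
Write `E k = {x | ε ≤ |f k x - g x|}`. The proportion of indices `k < n` with `x ∈ E k` tends to `0`
for almost every `x`, and it is bounded by `1`, so by dominated convergence its integral, the Cesàro
mean of `λ (E k)`, tends to `0`. A nonnegative sequence with Cesàro means tending to `0` converges
statistically to `0` by Markov's inequality for the counting measure on `{0, …, n - 1}`.
-/

lemma statTendsto_zero_of_cesaro_tendsto_zero {c : ℕ → ℝ} (hc : ∀ n, 0 ≤ c n)
    (h : Tendsto (fun n : ℕ => (∑ k ∈ range n, c k) / n) atTop (𝓝 0)) :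
    StatTendsto c 0 := by
  intro ε hε
  have hmarkov : ∀ n : ℕ, (#{k ∈ range n | k ∈ {k | ε ≤ |c k - 0|}} : ℝ) / n
      ≤ ε⁻¹ * ((∑ k ∈ range n, c k) / n) := by
    intro n
    rw [mul_div_assoc']
    gcongr
    rw [le_inv_mul_iff₀ hε]
    calc ε * #{k ∈ range n | k ∈ {k | ε ≤ |c k - 0|}}
        = #{k ∈ range n | k ∈ {k | ε ≤ |c k - 0|}} • ε := by rw [nsmul_eq_mul, mul_comm]
      _ ≤ ∑ k ∈ range n with k ∈ {k | ε ≤ |c k - 0|}, c k :=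
          card_nsmul_le_sum _ _ _ fun k hk => by
            simpa [abs_of_nonneg (hc k)] using (mem_filter.1 hk).2
      _ ≤ ∑ k ∈ range n, c k :=
          sum_le_sum_of_subset_of_nonneg (filter_subset _ _) fun k _ _ => hc k
  exact squeeze_zero (fun n => by positivity) hmarkov (by simpa using h.const_mul ε⁻¹)

lemma tendsto_cesaro_measureReal_of_ae_dens_zero {α : Type*} [MeasurableSpace α]
    {μ : Measure α} [IsFiniteMeasure μ] {E : ℕ → Set α} (hE : ∀ k, MeasurableSet (E k))
    (h : ∀ᵐ x ∂μ, dens {k | x ∈ E k} 0) :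
    Tendsto (fun n : ℕ => (∑ k ∈ range n, μ.real (E k)) / n) atTop (𝓝 0) := by
  set φ : ℕ → α → ℝ := fun n x => (∑ k ∈ range n, (E k).indicator 1 x) / n
  have hφ_eq : ∀ n x, φ n x = (#{k ∈ range n | k ∈ {k | x ∈ E k}} : ℝ) / n := by
    intro n x
    simp only [φ, Set.indicator_apply, Pi.one_apply, sum_boole, Set.mem_ofPred_eq]
  have hφ_int : ∀ n, ∫ x, φ n x ∂μ = (∑ k ∈ range n, μ.real (E k)) / n := by
    intro n
    rw [integral_div, integral_finsetSum _ fun k _ => (integrable_const 1).indicator (hE k)]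
    simp_rw [integral_indicator_one (hE _)]
  have hφ_le : ∀ n x, ‖φ n x‖ ≤ 1 := by
    intro n x
    rw [hφ_eq, Real.norm_of_nonneg (by positivity)]
    exact div_le_one_of_le₀ (by exact_mod_cast (card_filter_le _ _).trans (card_range n).le)
      n.cast_nonneg
  have hφ_meas : ∀ n, AEStronglyMeasurable (φ n) μ := fun n =>
    ((Finset.measurable_sum _ fun k _ => measurable_const.indicator (hE k)).div_const _)
      |>.aestronglyMeasurable
  have hφ_lim := tendsto_integral_of_dominated_convergence (fun _ => (1 : ℝ)) hφ_meas
    (integrable_const 1) (fun n => ae_of_all _ (hφ_le n))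
    (h.mono fun x hx => by simp_rw [hφ_eq]; exact hx)
  simpa only [hφ_int, integral_zero] using hφ_lim

theorem statAE_implies_statInMeasure
    (f : ℕ → ℝ → ℝ) (g : ℝ → ℝ)
    (hf : ∀ n, Measurable (f n)) (hg : Measurable g)
    (μ : Measure ℝ) (hμ : μ = volume.restrict (Set.Ico (0:ℝ) 1))
    (hae : ∀ᵐ x ∂μ, StatTendsto (fun n => f n x) (g x)) :
    ∀ ε > 0, StatTendsto (fun n => (μ {x | ε ≤ |f n x - g x|}).toReal) 0 := by
  intro ε hε
  have : IsFiniteMeasure μ := hμ ▸ isFiniteMeasure_restrict.2 (by simp)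
  refine statTendsto_zero_of_cesaro_tendsto_zero (fun n => ENNReal.toReal_nonneg) ?_
  exact tendsto_cesaro_measureReal_of_ae_dens_zero
    (fun n => measurableSet_le measurable_const ((hf n).sub hg).abs)
    (hae.mono fun x hx => hx ε hε)
end

section
/- If a sequence (f_n) of measurable real-valued functions on [0,1) converges statistically almost everywhere to a function f, then f is measurable (with respect to the Lebesgue σ-algebra). -/
open Filter MeasureTheory
open scoped Classical ENNReal

/-
The statistical limit superior `inf {q ∈ ℚ : {k : q < a k} has upper density 0}` of a
sequence equals its statistical limit whenever the latter exists. For a sequence of measurable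
functions it is a countable infimum of functions built from limsups of finite counting ratios,
hence measurable; so the statistical limit agrees a.e. with a measurable function.
-/

noncomputable def upperDensity (A : Set ℕ) : ℝ≥0∞ :=
  limsup (fun n : ℕ => ENNReal.ofReal
    ((((Finset.range n).filter (fun k => k ∈ A)).card : ℝ) / n)) atTop

theorem dens.mono_zero {A B : Set ℕ} (hBA : B ⊆ A) (hA : dens A 0) : dens B 0 := by
  refine squeeze_zero (fun n => by positivity) (fun n => ?_) hA
  gcongr

theorem dens.compl {A : Set ℕ} {c : ℝ} (hA : dens A c) : dens Aᶜ (1 - c) := by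
  have hcard (n : ℕ) : (((Finset.range n).filter (fun k => k ∈ Aᶜ)).card : ℝ) =
      n - ((Finset.range n).filter (fun k => k ∈ A)).card := by
    have := Finset.card_filter_add_card_filter_not (s := Finset.range n) (p := fun k => k ∈ A)
    rw [Finset.card_range] at this
    simp only [Set.mem_compl_iff]
    rw [eq_sub_iff_add_eq', ← Nat.cast_add, this]
  refine (tendsto_const_nhds.sub hA).congr' ?_
  filter_upwards [eventually_ne_atTop 0] with n hn
  rw [← div_self (Nat.cast_ne_zero.mpr hn), ← sub_div]
  -- `convert` reconciles the `Decidable` instances of `· ∈ Aᶜ` in `hcard` and in `dens`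
  convert (congrArg (· / (n : ℝ)) (hcard n)).symm

theorem dens.upperDensity_eq {A : Set ℕ} {c : ℝ} (hA : dens A c) :
    upperDensity A = ENNReal.ofReal c :=
  ((ENNReal.continuous_ofReal.tendsto c).comp hA).limsup_eq

theorem measurable_upperDensity_setOf {X : Type*} [MeasurableSpace X] {p : ℕ → X → Prop}
    (hp : ∀ k, MeasurableSet {x | p k x}) : Measurable fun x => upperDensity {k | p k x} := by
  refine Measurable.limsup fun n => ENNReal.measurable_ofReal.comp (Measurable.div_const ?_ _)
  simp only [Set.mem_ofPred_eq, Finset.card_filter, Nat.cast_sum, Nat.cast_ite, Nat.cast_one,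
    Nat.cast_zero]
  exact Finset.measurable_sum _ fun k _ => Measurable.ite (hp k) measurable_const measurable_const

theorem StatTendsto.dens_setOf_lt_of_lt {a : ℕ → ℝ} {l q : ℝ} (h : StatTendsto a l)
    (hq : l < q) : dens {k | q < a k} 0 :=
  (h (q - l) (sub_pos.mpr hq)).mono_zero fun _ hk =>
    (sub_le_sub_right (le_of_lt hk) l).trans (le_abs_self _)

theorem StatTendsto.dens_setOf_lt_of_gt {a : ℕ → ℝ} {l q : ℝ} (h : StatTendsto a l)
    (hq : q < l) : dens {k | q < a k} 1 := by
  have hle : dens {k | a k ≤ q} 0 := (h (l - q) (sub_pos.mpr hq)).mono_zero fun _ hk => by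
    simp only [Set.mem_ofPred_eq] at hk ⊢
    rw [abs_sub_comm]
    exact (sub_le_sub_left hk l).trans (le_abs_self _)
  simpa [Set.compl_ofPred] using hle.compl

noncomputable def statLimsup (a : ℕ → ℝ) : EReal :=
  ⨅ q : ℚ, if upperDensity {k | (q : ℝ) < a k} = 0 then ((q : ℝ) : EReal) else ⊤

theorem StatTendsto.statLimsup_eq {a : ℕ → ℝ} {l : ℝ} (h : StatTendsto a l) :
    statLimsup a = l := by
  apply le_antisymm
  · refine le_of_forall_gt_imp_ge_of_dense fun b hb => ?_
    obtain ⟨q, hlq, hqb⟩ := EReal.lt_iff_exists_rat_btwn.mp hb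
    have hzero : upperDensity {k | (q : ℝ) < a k} = 0 := by
      rw [(h.dens_setOf_lt_of_lt (EReal.coe_lt_coe_iff.mp hlq)).upperDensity_eq,
        ENNReal.ofReal_zero]
    refine (iInf_le _ q).trans ?_
    rw [if_pos hzero]
    exact hqb.le
  · refine le_iInf fun q => ?_
    split_ifs with hzero
    · refine EReal.coe_le_coe_iff.mpr (not_lt.mp fun hql => ?_)
      rw [(h.dens_setOf_lt_of_gt hql).upperDensity_eq, ENNReal.ofReal_one] at hzero
      exact one_ne_zero hzero
    · exact le_top

theorem measurable_statLimsup {X : Type*} [MeasurableSpace X] {f : ℕ → X → ℝ}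
    (hf : ∀ n, Measurable (f n)) : Measurable fun x => statLimsup fun n => f n x :=
  Measurable.iInf fun _ => Measurable.ite
    (measurable_upperDensity_setOf (fun k => measurableSet_lt measurable_const (hf k))
      (measurableSet_singleton 0)) measurable_const measurable_const

theorem limit_aemeasurable_of_statAE_general
    (f : ℕ → ℝ → ℝ) (g : ℝ → ℝ)
    (hf : ∀ n, Measurable (f n))
    (μ : Measure ℝ)
    (hae : ∀ᵐ x ∂μ, StatTendsto (fun n => f n x) (g x)) :
    AEMeasurable g μ :=
  ⟨fun x => (statLimsup fun n => f n x).toReal, (measurable_statLimsup hf).ereal_toReal,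
    hae.mono fun x hx => by dsimp only; rw [hx.statLimsup_eq, EReal.toReal_coe]⟩

theorem limit_aemeasurable_of_statAE
    (f : ℕ → ℝ → ℝ) (g : ℝ → ℝ)
    (hf : ∀ n, Measurable (f n))
    (μ : Measure ℝ) (hμ : μ = volume.restrict (Set.Ico (0:ℝ) 1))
    (hae : ∀ᵐ x ∂μ, StatTendsto (fun n => f n x) (g x)) :
    AEMeasurable g μ :=
  limit_aemeasurable_of_statAE_general f g hf μ hae
end

section
/- There exists a sequence (f_k) of measurable functions on [0,1) (indicator functions of dyadic intervals suitably spaced out with stretches of the zero function) that converges in measure to 0, but does not converge statistically almost everywhere to 0; in fact, for every x ∈ [0,1) and every ε ∈ (0,1), limsup_n |{k ≤ n : f_k(x) ≥ ε}|/n ≥ 1/2 while liminf_n |{k ≤ n : f_k(x) ≥ ε}|/n ≤ 1/3. -/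
open Filter MeasureTheory
open scoped Classical ENNReal

open Set

/-!
Run the typewriter sequence of dyadic intervals (all intervals of length `2⁻ᵐ`, then all of
length `2⁻ᵐ⁻¹`, …) slowly: the indicator of the `c`-th interval is repeated on the whole block
`[2^(3c), 2^(3c+1))` of indices, and the next two blocks `[2^(3c+1), 2^(3c+3))` carry the zero
function. The measure of the support tends to `0`. Every `x ∈ [0,1)` lies in infinitely many
intervals of the typewriter sequence, and at the end `n = 2^(3c+1)` of such a block at least half of
the indices `k < n` have `f k x = 1`; at the end `n = 2^(3c+3)` of two zero blocks at most a
quarter of them do.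
-/

section CountingRatio

variable {p : ℕ → Prop} [DecidablePred p]

lemma card_filter_range_div_le_one (n : ℕ) :
    (((Finset.range n).filter p).card : ℝ) / n ≤ 1 :=
  div_le_one_of_le₀ (by exact_mod_cast (Finset.card_filter_le _ _).trans (Finset.card_range n).le)
    n.cast_nonneg

lemma half_le_card_filter_range_div {m : ℕ} (hm : 0 < m) (hp : ∀ k, m ≤ k → k < 2 * m → p k) :
    (1 / 2 : ℝ) ≤ (((Finset.range (2 * m)).filter p).card : ℝ) / (2 * m : ℕ) := by
  have hcard : m ≤ ((Finset.range (2 * m)).filter p).card := by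
    calc m = (Finset.Ico m (2 * m)).card := by rw [Nat.card_Ico]; omega
      _ ≤ _ := Finset.card_le_card fun k hk => by
        rw [Finset.mem_Ico] at hk
        exact Finset.mem_filter.2 ⟨Finset.mem_range.2 hk.2, hp k hk.1 hk.2⟩
  rw [le_div_iff₀ (by positivity)]
  push_cast
  linarith [(Nat.cast_le (α := ℝ)).2 hcard]

lemma card_filter_range_div_le_quarter {m : ℕ} (hp : ∀ k, m ≤ k → k < 4 * m → ¬ p k) :
    (((Finset.range (4 * m)).filter p).card : ℝ) / (4 * m : ℕ) ≤ 1 / 4 := by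
  have hcard : ((Finset.range (4 * m)).filter p).card ≤ m := by
    calc _ ≤ (Finset.range m).card := Finset.card_le_card fun k hk => by
          rw [Finset.mem_filter, Finset.mem_range] at hk
          exact Finset.mem_range.2 (not_le.1 fun h => hp k h hk.1 hk.2)
      _ = m := Finset.card_range m
  rcases Nat.eq_zero_or_pos m with rfl | hm
  · norm_num
  rw [div_le_iff₀ (by positivity)]
  push_cast
  linarith [(Nat.cast_le (α := ℝ)).2 hcard]

lemma le_limsup_card_filter_range_div
    (h : ∃ᶠ m in atTop, ∀ k, m ≤ k → k < 2 * m → p k) :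
    (1 / 2 : ℝ) ≤ limsup (fun n : ℕ => (((Finset.range n).filter p).card : ℝ) / n) atTop := by
  refine le_limsup_of_frequently_le ?_ (isBoundedUnder_of ⟨1, card_filter_range_div_le_one⟩)
  refine (tendsto_id.const_mul_atTop' two_pos).frequently ?_
  exact (h.and_eventually (eventually_gt_atTop 0)).mono fun m ⟨hp, hm⟩ =>
    half_le_card_filter_range_div hm hp

lemma liminf_card_filter_range_div_le
    (h : ∃ᶠ m in atTop, ∀ k, m ≤ k → k < 4 * m → ¬ p k) :
    liminf (fun n : ℕ => (((Finset.range n).filter p).card : ℝ) / n) atTop ≤ 1 / 4 := by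
  refine liminf_le_of_frequently_le ?_ (isBoundedUnder_of ⟨0, fun n => by positivity⟩)
  exact (tendsto_id.const_mul_atTop' four_pos).frequently
    (h.mono fun m hp => card_filter_range_div_le_quarter hp)

end CountingRatio

lemma le_indicator_one_iff {α : Type*} {s : Set α} {x : α} {ε : ℝ} (h0 : 0 < ε) (h1 : ε ≤ 1) :
    ε ≤ s.indicator 1 x ↔ x ∈ s := by
  by_cases hx : x ∈ s <;> simp [hx, h1, h0]

lemma tendsto_log_two_atTop : Tendsto (Nat.log 2) atTop atTop :=
  tendsto_atTop_atTop.2 fun m => ⟨2 ^ m, fun _ hk => Nat.le_log_of_pow_le one_lt_two hk⟩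

section Typewriter

noncomputable def dyadicInterval (m j : ℕ) : Set ℝ := Ico (j / 2 ^ m) ((j + 1) / 2 ^ m)

lemma volume_dyadicInterval (m j : ℕ) :
    volume (dyadicInterval m j) = ENNReal.ofReal ((2 : ℝ)⁻¹ ^ m) := by
  rw [dyadicInterval, Real.volume_Ico, ← sub_div, add_sub_cancel_left, one_div, inv_pow]

lemma exists_mem_dyadicInterval {x : ℝ} (hx : x ∈ Ico 0 1) (m : ℕ) :
    ∃ j < 2 ^ m, x ∈ dyadicInterval m j := by
  have h2 : (0 : ℝ) < 2 ^ m := by positivity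
  have hx2 : 0 ≤ x * 2 ^ m := by have := hx.1; positivity
  refine ⟨⌊x * 2 ^ m⌋₊, ?_, ?_, ?_⟩
  · exact_mod_cast (Nat.floor_lt hx2).2 (by push_cast; nlinarith [hx.2])
  · rw [div_le_iff₀ h2]
    exact Nat.floor_le hx2
  · rw [lt_div_iff₀ h2]
    exact Nat.lt_floor_add_one _

/-- Writing `c = 2 ^ m + j` with `j < 2 ^ m` (and `m = 0`, `j = 0` for `c = 0`), the `c`-th
interval is `[j / 2 ^ m, (j + 1) / 2 ^ m)`. -/
noncomputable def typewriter (c : ℕ) : Set ℝ :=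
  dyadicInterval (Nat.log 2 c) (c - 2 ^ Nat.log 2 c)

lemma tendsto_volume_typewriter : Tendsto (fun c => volume (typewriter c)) atTop (nhds 0) := by
  simp_rw [typewriter, volume_dyadicInterval]
  rw [← ENNReal.ofReal_zero]
  exact ENNReal.tendsto_ofReal
    ((tendsto_pow_atTop_nhds_zero_of_lt_one (by norm_num) (by norm_num)).comp tendsto_log_two_atTop)

lemma frequently_mem_typewriter {x : ℝ} (hx : x ∈ Ico 0 1) :
    ∃ᶠ c in atTop, x ∈ typewriter c := by
  refine frequently_atTop.2 fun N => ?_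
  obtain ⟨j, hj, hxj⟩ := exists_mem_dyadicInterval hx N
  have hlog : Nat.log 2 (2 ^ N + j) = N :=
    Nat.log_eq_of_pow_le_of_lt_pow (by omega) (by rw [pow_succ]; omega)
  refine ⟨2 ^ N + j, Nat.lt_two_pow_self.le.trans (Nat.le_add_right _ _), ?_⟩
  rwa [typewriter, hlog, Nat.add_sub_cancel_left]

end Typewriter

section SparseTypewriter

noncomputable def sparseTypewriterSet (k : ℕ) : Set ℝ :=
  if 3 ∣ Nat.log 2 k then typewriter (Nat.log 2 k / 3) else ∅

noncomputable def sparseTypewriter (k : ℕ) : ℝ → ℝ := (sparseTypewriterSet k).indicator 1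

lemma measurable_sparseTypewriter (k : ℕ) : Measurable (sparseTypewriter k) := by
  refine measurable_const.indicator ?_
  unfold sparseTypewriterSet typewriter dyadicInterval
  split_ifs
  exacts [measurableSet_Ico, MeasurableSet.empty]

lemma volume_sparseTypewriterSet_le (k : ℕ) :
    volume (sparseTypewriterSet k) ≤ volume (typewriter (Nat.log 2 k / 3)) := by
  unfold sparseTypewriterSet
  split_ifs <;> simp

lemma tendsto_measure_le_abs_sparseTypewriter {ε : ℝ} (hε : 0 < ε) :
    Tendsto (fun k => ((volume.restrict (Ico (0 : ℝ) 1)) {x | ε ≤ |sparseTypewriter k x|}).toReal)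
      atTop (nhds 0) := by
  have hsub (k : ℕ) : {x | ε ≤ |sparseTypewriter k x|} ⊆ sparseTypewriterSet k :=
    fun x (hx : ε ≤ |sparseTypewriter k x|) =>
      support_indicator_subset (f := (1 : ℝ → ℝ)) fun h0 => by
        rw [sparseTypewriter, h0, abs_zero] at hx
        linarith
  have hlim : Tendsto (fun k => volume (typewriter (Nat.log 2 k / 3))) atTop (nhds 0) :=
    tendsto_volume_typewriter.comp
      ((Nat.tendsto_div_const_atTop three_ne_zero).comp tendsto_log_two_atTop)
  refine (ENNReal.tendsto_toReal ENNReal.zero_ne_top).comp ?_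
  refine tendsto_of_tendsto_of_tendsto_of_le_of_le tendsto_const_nhds hlim (fun _ => bot_le)
    fun k => ?_
  calc _ ≤ volume {x | ε ≤ |sparseTypewriter k x|} := Measure.restrict_apply_le _ _
    _ ≤ volume (sparseTypewriterSet k) := measure_mono (hsub k)
    _ ≤ _ := volume_sparseTypewriterSet_le k

lemma sparseTypewriterSet_of_log_eq {k c : ℕ} (h : Nat.log 2 k = 3 * c) :
    sparseTypewriterSet k = typewriter c := by
  rw [sparseTypewriterSet, if_pos (h ▸ dvd_mul_right 3 c), h, Nat.mul_div_cancel_left c three_pos]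

lemma sparseTypewriterSet_of_not_dvd {k : ℕ} (h : ¬ 3 ∣ Nat.log 2 k) :
    sparseTypewriterSet k = ∅ :=
  if_neg h

lemma frequently_forall_mem_sparseTypewriterSet {x : ℝ} (hx : x ∈ Ico 0 1) :
    ∃ᶠ m in atTop, ∀ k, m ≤ k → k < 2 * m → x ∈ sparseTypewriterSet k := by
  have hpow : Tendsto (fun c => 2 ^ (3 * c)) atTop atTop :=
    StrictMono.tendsto_atTop fun a b h => Nat.pow_lt_pow_right one_lt_two (by omega)
  refine hpow.frequently ((frequently_mem_typewriter hx).mono fun c hc k hk1 hk2 => ?_)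
  rwa [sparseTypewriterSet_of_log_eq (Nat.log_eq_of_pow_le_of_lt_pow hk1 (by rw [pow_succ]; omega))]

lemma frequently_forall_notMem_sparseTypewriterSet (x : ℝ) :
    ∃ᶠ m in atTop, ∀ k, m ≤ k → k < 4 * m → x ∉ sparseTypewriterSet k := by
  have hpow : Tendsto (fun c => 2 ^ (3 * c + 1)) atTop atTop :=
    StrictMono.tendsto_atTop fun a b h => Nat.pow_lt_pow_right one_lt_two (by omega)
  refine hpow.frequently (Frequently.of_forall fun c k hk1 hk2 => ?_)
  have hk0 : k ≠ 0 := ((Nat.two_pow_pos _).trans_le hk1).ne'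
  have hlo : 3 * c + 1 ≤ Nat.log 2 k := Nat.le_log_of_pow_le one_lt_two hk1
  have hhi : Nat.log 2 k < 3 * c + 3 :=
    Nat.log_lt_of_lt_pow hk0 (by rw [show 3 * c + 3 = 3 * c + 1 + 2 by ring, pow_add]; omega)
  rw [sparseTypewriterSet_of_not_dvd (by omega)]
  exact notMem_empty x

end SparseTypewriter

theorem exists_conv_in_measure_not_statAE :
    ∃ f : ℕ → ℝ → ℝ, (∀ k, Measurable (f k)) ∧
      (∀ ε > 0,
        Tendsto (fun k =>
          ((volume.restrict (Set.Ico (0:ℝ) 1)) {x | ε ≤ |f k x|}).toReal)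
          atTop (nhds 0)) ∧
      (∀ x ∈ Set.Ico (0:ℝ) 1, ∀ ε ∈ Set.Ioo (0:ℝ) 1,
        (1 / 2 : ℝ) ≤ Filter.limsup
          (fun n : ℕ => (((Finset.range n).filter (fun k => ε ≤ f k x)).card : ℝ) / n)
          atTop ∧
        Filter.liminf
          (fun n : ℕ => (((Finset.range n).filter (fun k => ε ≤ f k x)).card : ℝ) / n)
          atTop ≤ (1 / 3 : ℝ)) := by
  refine ⟨sparseTypewriter, measurable_sparseTypewriter,
    fun ε hε => tendsto_measure_le_abs_sparseTypewriter hε, fun x hx ε ⟨hε0, hε1⟩ => ?_⟩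
  have hmem (k : ℕ) : ε ≤ sparseTypewriter k x ↔ x ∈ sparseTypewriterSet k :=
    le_indicator_one_iff hε0 hε1.le
  constructor
  · exact le_limsup_card_filter_range_div <| (frequently_forall_mem_sparseTypewriterSet hx).mono
      fun m hm k hk1 hk2 => (hmem k).2 (hm k hk1 hk2)
  · refine (liminf_card_filter_range_div_le ?_).trans (by norm_num)
    exact (frequently_forall_notMem_sparseTypewriterSet x).mono
      fun m hm k hk1 hk2 => mt (hmem k).1 (hm k hk1 hk2)
end
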